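/- arXiv:2206.10749 — 7 statements merged into one kernel-verified Lean document; each statement's English description precedes it below -/
import Mathlib

section
/- Let G be a simple group and, for each integer k ≥ 1, let f_k : G → ℝ satisfy |f_k(gh) − f_k(g) − f_k(h)| ≤ 2/k for all g, h ∈ G and f_k(a g a⁻¹) = f_k(g) for all a, g ∈ G. If there exists g₀ ∈ G with g₀ ≠ 1 and f_k(g₀) = 0 for all k ≥ 1, then for every g ∈ G the sequence (k·f_k(g))_{k≥1} is bounded. -/
/-- In a simple group `G`, if the `f k` are conjugation-invariant with
defect at most `2/k`, and some `g₀ ≠ 1` satisfies `f k g₀ = 0` for all `k ≥ 1`, then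
for every `g ∈ G` the sequence `(k · f k g)_{k ≥ 1}` is bounded. -/
theorem subleading_bounded_of_simple {G : Type*} [Group G] [IsSimpleGroup G]
    (f : ℕ → G → ℝ)
    (hdef : ∀ k : ℕ, 1 ≤ k → ∀ g h : G, |f k (g * h) - f k g - f k h| ≤ 2 / (k : ℝ))
    (hconj : ∀ k : ℕ, 1 ≤ k → ∀ a g : G, f k (a * g * a⁻¹) = f k g)
    (g₀ : G) (hg₀ : g₀ ≠ 1) (hf₀ : ∀ k : ℕ, 1 ≤ k → f k g₀ = 0) :
    ∀ g : G, ∃ C : ℝ, ∀ k : ℕ, 1 ≤ k → |(k : ℝ) * f k g| ≤ C := by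
  -- key: defect scaled by k
  have hkpos : ∀ k : ℕ, 1 ≤ k → (0 : ℝ) < k := by
    intro k hk; exact_mod_cast Nat.lt_of_lt_of_le Nat.zero_lt_one hk
  have hdef' : ∀ k : ℕ, 1 ≤ k → ∀ g h : G,
      |(k : ℝ) * f k (g * h) - (k : ℝ) * f k g - (k : ℝ) * f k h| ≤ 2 := by
    intro k hk g h
    have hk' := hkpos k hk
    have := hdef k hk g h
    have h2 : |(k : ℝ)| * |f k (g * h) - f k g - f k h| ≤ |(k : ℝ)| * (2 / k) := by
      apply mul_le_mul_of_nonneg_left this (abs_nonneg _)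
    rw [← abs_mul] at h2
    have h3 : (k : ℝ) * (f k (g * h) - f k g - f k h)
        = (k : ℝ) * f k (g * h) - (k : ℝ) * f k g - (k : ℝ) * f k h := by ring
    rw [h3] at h2
    rwa [abs_of_pos hk', mul_div_cancel₀ 2 (ne_of_gt hk')] at h2
  have hone : ∀ k : ℕ, 1 ≤ k → |(k : ℝ) * f k 1| ≤ 2 := by
    intro k hk
    have := hdef' k hk 1 1
    rw [one_mul] at this
    calc |(k : ℝ) * f k 1| = |(k : ℝ) * f k 1 - (k : ℝ) * f k 1 - (k : ℝ) * f k 1| := by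
          rw [abs_sub_comm]; congr 1; ring
      _ ≤ 2 := this
  set H : Subgroup G :=
    { carrier := {g | ∃ C : ℝ, ∀ k : ℕ, 1 ≤ k → |(k : ℝ) * f k g| ≤ C}
      one_mem' := ⟨2, hone⟩
      mul_mem' := by
        rintro a b ⟨Ca, hCa⟩ ⟨Cb, hCb⟩
        refine ⟨Ca + Cb + 2, fun k hk => ?_⟩
        have := hdef' k hk a b
        have h1 : |(k : ℝ) * f k (a * b)|
            ≤ |(k : ℝ) * f k (a * b) - (k : ℝ) * f k a - (k : ℝ) * f k b|
              + |(k : ℝ) * f k a| + |(k : ℝ) * f k b| := by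
          have := abs_add_le ((k : ℝ) * f k (a * b) - (k : ℝ) * f k a - (k : ℝ) * f k b + (k : ℝ) * f k a) ((k : ℝ) * f k b)
          have h2 := abs_add_le ((k : ℝ) * f k (a * b) - (k : ℝ) * f k a - (k : ℝ) * f k b) ((k : ℝ) * f k a)
          calc |(k : ℝ) * f k (a * b)|
              = |((k : ℝ) * f k (a * b) - (k : ℝ) * f k a - (k : ℝ) * f k b + (k : ℝ) * f k a) + (k : ℝ) * f k b| := by
                congr 1; ring
            _ ≤ _ := this
            _ ≤ _ := by linarith
        linarith [hCa k hk, hCb k hk]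
      inv_mem' := by
        rintro a ⟨Ca, hCa⟩
        refine ⟨Ca + 4, fun k hk => ?_⟩
        have hd := hdef' k hk a a⁻¹
        rw [mul_inv_cancel] at hd
        have h1 := hone k hk
        have := abs_sub_abs_le_abs_sub ((k : ℝ) * f k a⁻¹) ((k : ℝ) * f k 1 - (k : ℝ) * f k a)
        have h2 : |(k : ℝ) * f k a⁻¹ - ((k : ℝ) * f k 1 - (k : ℝ) * f k a)|
            = |(k : ℝ) * f k 1 - (k : ℝ) * f k a - (k : ℝ) * f k a⁻¹| := by
          rw [abs_sub_comm]
        have h3 : |(k : ℝ) * f k 1 - (k : ℝ) * f k a| ≤ |(k : ℝ) * f k 1| + |(k : ℝ) * f k a| :=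
          abs_sub _ _
        have h4 := abs_abs ((k : ℝ) * f k 1 - (k : ℝ) * f k a)
        calc |(k : ℝ) * f k a⁻¹|
            ≤ |(k : ℝ) * f k 1 - (k : ℝ) * f k a| + |(k : ℝ) * f k a⁻¹ - ((k : ℝ) * f k 1 - (k : ℝ) * f k a)| := by
              have := abs_add_le ((k : ℝ) * f k 1 - (k : ℝ) * f k a) ((k : ℝ) * f k a⁻¹ - ((k : ℝ) * f k 1 - (k : ℝ) * f k a))
              calc |(k : ℝ) * f k a⁻¹| = |((k : ℝ) * f k 1 - (k : ℝ) * f k a) + ((k : ℝ) * f k a⁻¹ - ((k : ℝ) * f k 1 - (k : ℝ) * f k a))| := by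
                    congr 1; ring
                _ ≤ _ := this
          _ ≤ Ca + 4 := by rw [h2] at *; linarith [hCa k hk] }
  have hHnormal : H.Normal := by
    constructor
    rintro g ⟨C, hC⟩ a
    refine ⟨C, fun k hk => ?_⟩
    rw [hconj k hk a g]
    exact hC k hk
  have hg₀H : g₀ ∈ H := ⟨0, fun k hk => by rw [hf₀ k hk, mul_zero, abs_zero]⟩
  rcases hHnormal.eq_bot_or_eq_top with hbot | htop
  · exfalso
    rw [hbot] at hg₀H
    exact hg₀ (Subgroup.mem_bot.mp hg₀H)
  · intro g
    have : g ∈ H := htop ▸ Subgroup.mem_top g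
    exact this
end

section
/- Let G be a group, H a subgroup of G, (f_k : G → ℝ)_{k∈ℕ} a family of functions, and (D_k)_{k∈ℕ} nonnegative reals with D_k → 0, such that |f_k(gh) − f_k(g) − f_k(h)| ≤ D_k for all g, h ∈ G and all k. Suppose Cal : H → ℝ is a group homomorphism such that for every h ∈ H, f_k(h) → Cal(h) as k → ∞. Then there exists a group homomorphism C : G → ℝ with C(h) = Cal(h) for all h ∈ H. -/
/-!
Extend the limit functional, defined on convergent sequences, to a linear functional `L` on all
real sequences (a Hamel-basis argument, with no continuity). Then `C g := L (k ↦ f k g)` is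
additive because the defect sequences tend to zero, and it agrees with `Cal` on `H` because
`f k h → Cal h` there.
-/

open Filter Topology

section LimitFunctional

variable {ι K E : Type*} (l : Filter ι) [l.NeBot] [Field K] [AddCommGroup E] [Module K E]
  [TopologicalSpace E] [ContinuousAdd E] [ContinuousConstSMul K E] [T2Space E]

def convergentAlong : Submodule K (ι → E) where
  carrier := {v | ∃ x, Tendsto v l (𝓝 x)}
  add_mem' := fun ⟨x, hx⟩ ⟨y, hy⟩ => ⟨x + y, hx.add hy⟩
  zero_mem' := ⟨0, tendsto_const_nhds⟩
  smul_mem' := fun c _ ⟨x, hx⟩ => ⟨c • x, hx.const_smul c⟩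

noncomputable def limAlong : convergentAlong (K := K) (E := E) l →ₗ[K] E where
  toFun v := limUnder l v
  map_add' := fun ⟨u, x, hx⟩ ⟨v, y, hy⟩ => by
    change limUnder l (u + v) = limUnder l u + limUnder l v
    rw [hx.limUnder_eq, hy.limUnder_eq]
    exact (hx.add hy).limUnder_eq
  map_smul' := fun c ⟨v, x, hx⟩ => by
    change limUnder l (c • v) = c • limUnder l v
    rw [hx.limUnder_eq]
    exact (hx.const_smul c).limUnder_eq

theorem exists_linearMap_eq_of_tendsto :
    ∃ L : (ι → E) →ₗ[K] E, ∀ v x, Tendsto v l (𝓝 x) → L v = x := by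
  obtain ⟨L, hL⟩ := LinearMap.exists_extend (limAlong (K := K) (E := E) l)
  refine ⟨L, fun v x hv => ?_⟩
  calc L v = limAlong l ⟨v, x, hv⟩ := LinearMap.congr_fun hL ⟨v, x, hv⟩
    _ = x := hv.limUnder_eq

end LimitFunctional

theorem exists_additive_eq_of_tendsto_defect_zero {ι G E : Type*} [Mul G] (l : Filter ι)
    [l.NeBot] [AddCommGroup E] [Module ℝ E] [TopologicalSpace E] [IsTopologicalAddGroup E]
    [ContinuousConstSMul ℝ E] [T2Space E] (f : ι → G → E)
    (hdefect : ∀ a b, Tendsto (fun k => f k (a * b) - f k a - f k b) l (𝓝 0)) :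
    ∃ C : G → E, (∀ a b, C (a * b) = C a + C b) ∧
      ∀ g x, Tendsto (fun k => f k g) l (𝓝 x) → C g = x := by
  obtain ⟨L, hL⟩ := exists_linearMap_eq_of_tendsto (K := ℝ) (E := E) l
  refine ⟨fun g => L (fun k => f k g), fun a b => ?_, fun g x => hL _ x⟩
  have hzero : L (fun k => f k (a * b) - f k a - f k b) = 0 := hL _ 0 (hdefect a b)
  rw [← sub_eq_zero, ← map_add, ← map_sub, ← hzero]
  congr 1
  funext k
  simp only [Pi.sub_apply, Pi.add_apply]
  abel

theorem calabi_extends_general {G : Type*} [Group G] (H : Subgroup G)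
    (f : ℕ → G → ℝ) (D : ℕ → ℝ)
    (hDlim : Tendsto D atTop (nhds 0))
    (hdef : ∀ k : ℕ, ∀ g h : G, |f k (g * h) - f k g - f k h| ≤ D k)
    (Cal : H → ℝ)
    (hconv : ∀ h : H, Tendsto (fun k => f k (h : G)) atTop (nhds (Cal h))) :
    ∃ C : G → ℝ, (∀ a b : G, C (a * b) = C a + C b) ∧ ∀ h : H, C (h : G) = Cal h := by
  have hdefect : ∀ a b : G, Tendsto (fun k => f k (a * b) - f k a - f k b) atTop (𝓝 0) :=
    fun a b => squeeze_zero_norm (fun k => hdef k a b) hDlim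
  obtain ⟨C, hC, hClim⟩ := exists_additive_eq_of_tendsto_defect_zero atTop f hdefect
  exact ⟨C, hC, fun h => hClim _ _ (hconv h)⟩

/-- If the `f k : G → ℝ` have defects `D k → 0` and converge pointwise on a
subgroup `H` to a homomorphism `Cal : H → ℝ`, then `Cal` extends to a group homomorphism
`C : G → ℝ`. -/
theorem calabi_extends {G : Type*} [Group G] (H : Subgroup G)
    (f : ℕ → G → ℝ) (D : ℕ → ℝ)
    (hD0 : ∀ k, 0 ≤ D k) (hDlim : Tendsto D atTop (nhds 0))
    (hdef : ∀ k : ℕ, ∀ g h : G, |f k (g * h) - f k g - f k h| ≤ D k)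
    (Cal : H → ℝ) (hCal : ∀ a b : H, Cal (a * b) = Cal a + Cal b)
    (hconv : ∀ h : H, Tendsto (fun k => f k (h : G)) atTop (nhds (Cal h))) :
    ∃ C : G → ℝ, (∀ a b : G, C (a * b) = C a + C b) ∧ ∀ h : H, C (h : G) = Cal h :=
  calabi_extends_general H f D hDlim hdef Cal hconv
end

section
/- Let G be a group, H a subgroup of G, (f_k : G → ℝ)_{k∈ℕ} a family of functions, and (D_k)_{k∈ℕ} nonnegative reals with D_k → 0, such that |f_k(gh) − f_k(g) − f_k(h)| ≤ D_k for all g, h ∈ G and all k. Suppose Cal : H → ℝ is a group homomorphism such that for every h ∈ H, f_k(h) → Cal(h) as k → ∞. If in addition there exists g ∈ G such that the sequence (f_k(g))_{k∈ℕ} has no limit in ℝ, then the set of group homomorphisms C : G → ℝ satisfying C(h) = Cal(h) for all h ∈ H is infinite. -/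
/-!
Modulo null sequences, `x ↦ (f k x)ₖ` becomes an additive map `φ` from `G` into the real vector
space `V = (ℕ → ℝ) ⧸ c₀`, and on `H` it takes values in the line of constant sequences, where it
is `Cal`. Any linear functional on `V` that is the identity on that line turns `φ` into a
homomorphism extending `Cal`. Since `φ g` lies off the line, such a functional can take any
prescribed value at `φ g`, which gives one extension for every real number.
-/

open Filter Topology

section LinearFunctional

variable {K V W : Type*} [Field K] [AddCommGroup V] [Module K V] [AddCommGroup W] [Module K W]

theorem LinearMap.exists_comp_eq_and_apply_eq (ι : W →ₗ[K] V) (hι : LinearMap.ker ι = ⊥)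
    (g : W →ₗ[K] K) {w : V} (hw : w ∉ LinearMap.range ι) (t : K) :
    ∃ ℓ : V →ₗ[K] K, ℓ ∘ₗ ι = g ∧ ℓ w = t := by
  obtain ⟨ι', hι'⟩ := ι.exists_leftInverse_of_injective hι
  obtain ⟨e, hew, he⟩ := Submodule.exists_dual_map_eq_bot_of_notMem hw inferInstance
  have he_comp : e ∘ₗ ι = 0 := by
    rwa [← LinearMap.range_comp, LinearMap.range_eq_bot] at he
  refine ⟨g ∘ₗ ι' + ((t - g (ι' w)) / e w) • e, ?_, ?_⟩
  · rw [LinearMap.add_comp, LinearMap.smul_comp, he_comp, LinearMap.comp_assoc, hι']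
    simp
  · simp [div_mul_cancel₀ _ hew]

end LinearFunctional

namespace Filter

variable {α : Type*} {l : Filter α}

theorem zeroAtFilterSubmodule.mk_eq_mk_iff {u v : α → ℝ} :
    (Submodule.Quotient.mk u : (α → ℝ) ⧸ zeroAtFilterSubmodule ℝ l) = Submodule.Quotient.mk v ↔
      Tendsto (u - v) l (𝓝 0) :=
  Submodule.Quotient.eq _

theorem zeroAtFilterSubmodule.mk_eq_mk_const_iff {u : α → ℝ} {c : ℝ} :
    (Submodule.Quotient.mk u : (α → ℝ) ⧸ zeroAtFilterSubmodule ℝ l) =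
        Submodule.Quotient.mk (Function.const α c) ↔ Tendsto u l (𝓝 c) :=
  mk_eq_mk_iff.trans tendsto_sub_nhds_zero_iff

theorem zeroAtFilterSubmodule.ker_mkQ_comp_const [l.NeBot] :
    LinearMap.ker ((zeroAtFilterSubmodule ℝ l).mkQ ∘ₗ (LinearMap.const : ℝ →ₗ[ℝ] α → ℝ)) = ⊥ := by
  refine LinearMap.ker_eq_bot'.mpr fun c hc => ?_
  have hc' : Tendsto (Function.const α c) l (𝓝 0) := (Submodule.Quotient.mk_eq_zero _).mp hc
  exact tendsto_nhds_unique tendsto_const_nhds hc'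

theorem zeroAtFilterSubmodule.mk_apply_mul {G : Type*} [Mul G] {f : α → G → ℝ} {D : α → ℝ}
    (hD : Tendsto D l (𝓝 0)) (hdef : ∀ k a b, |f k (a * b) - f k a - f k b| ≤ D k) (a b : G) :
    (Submodule.Quotient.mk (fun k => f k (a * b)) : (α → ℝ) ⧸ zeroAtFilterSubmodule ℝ l) =
      Submodule.Quotient.mk (fun k => f k a) + Submodule.Quotient.mk (fun k => f k b) := by
  rw [← Submodule.Quotient.mk_add, mk_eq_mk_iff]
  refine squeeze_zero_norm (fun k => ?_) hD
  simpa [sub_sub] using hdef k a b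

end Filter

theorem infinitely_many_calabi_extensions_general {G : Type*} [Group G] (H : Subgroup G)
    (f : ℕ → G → ℝ) (D : ℕ → ℝ)
    (hDlim : Tendsto D atTop (nhds 0))
    (hdef : ∀ k : ℕ, ∀ g h : G, |f k (g * h) - f k g - f k h| ≤ D k)
    (Cal : H → ℝ)
    (hconv : ∀ h : H, Tendsto (fun k => f k (h : G)) atTop (nhds (Cal h)))
    (hbad : ∃ g : G, ∀ L : ℝ, ¬ Tendsto (fun k => f k g) atTop (nhds L)) :
    {C : G → ℝ | (∀ a b : G, C (a * b) = C a + C b) ∧ ∀ h : H, C (h : G) = Cal h}.Infinite := by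
  obtain ⟨g, hg⟩ := hbad
  let φ : G → (ℕ → ℝ) ⧸ zeroAtFilterSubmodule ℝ atTop :=
    fun x => Submodule.Quotient.mk fun k => f k x
  let δ := (zeroAtFilterSubmodule ℝ atTop).mkQ ∘ₗ (LinearMap.const : ℝ →ₗ[ℝ] ℕ → ℝ)
  have hφH (h : H) : φ h = δ (Cal h) := zeroAtFilterSubmodule.mk_eq_mk_const_iff.mpr (hconv h)
  have hφg : φ g ∉ LinearMap.range δ := by
    rintro ⟨c, hc⟩
    exact hg c (zeroAtFilterSubmodule.mk_eq_mk_const_iff.mp hc.symm)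
  choose ℓ hℓδ hℓg using
    δ.exists_comp_eq_and_apply_eq zeroAtFilterSubmodule.ker_mkQ_comp_const LinearMap.id hφg
  refine Set.infinite_of_injective_forall_mem (f := fun t => ℓ t ∘ φ) (fun s t hst => ?_)
    fun t => ⟨fun a b => ?_, fun h => ?_⟩
  · simpa [hℓg] using congrFun hst g
  · simp [φ, zeroAtFilterSubmodule.mk_apply_mul hDlim hdef]
  · simpa [hφH] using LinearMap.congr_fun (hℓδ t) (Cal h)

/-- In the setting of the Calabi extension theorem, if moreover some `g ∈ G`
is such that the sequence `(f k g)_k` has no limit in `ℝ`, then there are infinitely many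
group homomorphisms `G → ℝ` extending `Cal`. -/
theorem infinitely_many_calabi_extensions {G : Type*} [Group G] (H : Subgroup G)
    (f : ℕ → G → ℝ) (D : ℕ → ℝ)
    (hD0 : ∀ k, 0 ≤ D k) (hDlim : Tendsto D atTop (nhds 0))
    (hdef : ∀ k : ℕ, ∀ g h : G, |f k (g * h) - f k g - f k h| ≤ D k)
    (Cal : H → ℝ) (hCal : ∀ a b : H, Cal (a * b) = Cal a + Cal b)
    (hconv : ∀ h : H, Tendsto (fun k => f k (h : G)) atTop (nhds (Cal h)))
    (hbad : ∃ g : G, ∀ L : ℝ, ¬ Tendsto (fun k => f k g) atTop (nhds L)) :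
    {C : G → ℝ | (∀ a b : G, C (a * b) = C a + C b) ∧ ∀ h : H, C (h : G) = Cal h}.Infinite :=
  infinitely_many_calabi_extensions_general H f D hDlim hdef Cal hconv hbad
end

section
/- For k ∈ ℕ define S(k) := √(2^k)·∑_{i=1}^{2^k − 1} 1/√i. Then for every integer k ≥ 1, S(k) − 2·S(k−1) ≥ √(2^k)·(1 − 1/√2). -/
/-!
Write `H n = sumInvSqrt n = ∑_{i=1}^n 1/√i`. With `N = 2^(k-1)` one has
`S k - 2 S (k-1) = √N (√2 H(2N-1) - 2 H(N-1))`, so it suffices that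
`H(2n+1) ≥ √2 H n + 1 - 1/√2`. Inductively, passing from `n` to `n+1` adds
`1/√(2n+2) + 1/√(2n+3)` on the left and `√2/√(n+1) = 2/√(2n+2)` on the right; the deficit
`1/√(2n+2)` is covered by carrying the slack term `1/√(2(n+1))` through the induction,
using `1/√(2n+3) ≥ 1/√(2n+4)`.
-/

open Finset Real

noncomputable def sumInvSqrt (n : ℕ) : ℝ := ∑ i ∈ Icc 1 n, 1 / √(i : ℝ)

lemma sumInvSqrt_succ (n : ℕ) : sumInvSqrt (n + 1) = sumInvSqrt n + 1 / √((n : ℝ) + 1) := by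
  rw [sumInvSqrt, sum_Icc_succ_top (by omega), Nat.cast_succ, sumInvSqrt]

lemma sqrt_two_mul_one_div_sqrt (x : ℝ) : √2 * (1 / √x) = 2 * (1 / √(2 * x)) := by
  rw [sqrt_mul zero_le_two]
  rcases eq_or_ne (√x) 0 with hx | hx
  · simp [hx]
  · field_simp
    rw [sq_sqrt zero_le_two]

lemma sqrt_two_mul_sumInvSqrt_add_le (n : ℕ) :
    √2 * sumInvSqrt n + (1 - 1 / √2) + 1 / √(2 * ((n : ℝ) + 1)) ≤ sumInvSqrt (2 * n + 1) := by
  induction n with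
  | zero => simp [sumInvSqrt]
  | succ n ih =>
    have hsplit : sumInvSqrt (2 * (n + 1) + 1)
        = sumInvSqrt (2 * n + 1) + 1 / √(2 * ((n : ℝ) + 1)) + 1 / √(2 * (n : ℝ) + 3) := by
      rw [show 2 * (n + 1) + 1 = 2 * n + 1 + 1 + 1 by ring, sumInvSqrt_succ, sumInvSqrt_succ]
      push_cast
      ring_nf
    have hmono : 1 / √(2 * ((n + 1 : ℕ) + 1 : ℝ)) ≤ 1 / √(2 * (n : ℝ) + 3) := by
      gcongr
      push_cast
      linarith
    rw [sumInvSqrt_succ, mul_add, sqrt_two_mul_one_div_sqrt, hsplit]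
    linarith

lemma two_mul_sumInvSqrt_add_le (n : ℕ) :
    2 * sumInvSqrt n + (√2 - 1) ≤ √2 * sumInvSqrt (2 * n + 1) := by
  set t := 1 / √(2 * ((n : ℝ) + 1))
  have hscaled := mul_le_mul_of_nonneg_left (sqrt_two_mul_sumInvSqrt_add_le n) (sqrt_nonneg 2)
  have hexpand : √2 * (√2 * sumInvSqrt n + (1 - 1 / √2) + t)
      = 2 * sumInvSqrt n + (√2 - 1) + √2 * t := by
    field_simp
    rw [sq_sqrt zero_le_two]
    ring
  have htail : 0 ≤ √2 * t := by positivity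
  linarith

/-- With `S k = √(2^k) · ∑_{i=1}^{2^k − 1} 1/√i`, for every `k ≥ 1` one has
`S k − 2 S (k−1) ≥ √(2^k) (1 − 1/√2)`. -/
theorem S_difference_lower_bound (S : ℕ → ℝ)
    (hS : ∀ k : ℕ, S k = Real.sqrt (2 ^ k) *
      ∑ i ∈ (Finset.Icc 1 (2 ^ k - 1) : Finset ℕ), 1 / Real.sqrt (i : ℝ)) :
    ∀ k : ℕ, 1 ≤ k →
      S k - 2 * S (k - 1) ≥ Real.sqrt (2 ^ k) * (1 - 1 / Real.sqrt 2) := by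
  intro k hk
  obtain ⟨j, rfl⟩ : ∃ j, k = j + 1 := ⟨k - 1, by omega⟩
  have hidx : 2 ^ (j + 1) - 1 = 2 * (2 ^ j - 1) + 1 := by
    have := Nat.one_le_two_pow (n := j)
    rw [pow_succ]
    omega
  have hsqrt : √((2 : ℝ) ^ (j + 1)) = √2 * √(2 ^ j) := by
    rw [pow_succ', sqrt_mul zero_le_two]
  have hconst : √2 * √(2 ^ j) * (1 - 1 / √2) = √(2 ^ j) * (√2 - 1) := by
    field_simp
  have hbound := mul_le_mul_of_nonneg_left (two_mul_sumInvSqrt_add_le (2 ^ j - 1))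
    (sqrt_nonneg ((2 : ℝ) ^ j))
  rw [hS, hS, Nat.add_sub_cancel, hidx, hsqrt]
  simp only [sumInvSqrt] at hbound
  linarith
end

section
/- For k ∈ ℕ define S(k) := √(2^k)·∑_{i=1}^{2^k − 1} 1/√i. Then the sequence k ↦ S(k) − 2·S(k−1) − S(k−1)/(2^{k−1} − 1) tends to +∞ as k → ∞. -/
/-!
Write `H n = ∑_{i=1}^n 1/√i`, so that `S k = √(2^k) · H (2^k - 1)`. Pairing the terms `2j-1, 2j`
gives `1/√(2j-1) + 1/√(2j) ≥ √2/√j`, with a surplus `1 - 1/√2` at `j = 1`; hence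
`H (2n) ≥ √2 · H n + (1 - 1/√2)`, i.e. `S k - 2 S (k-1) ≥ √(2^k) (1 - 1/√2)`, which diverges.
On the other hand `H n ≤ 2√n` (telescoping `1/√i ≤ 2(√i - √(i-1))`), so `S (k-1) ≤ 2 · 2^(k-1)`
and `S (k-1)/(2^(k-1) - 1) ≤ 4`.
-/

open Filter Finset Real

noncomputable section

def invSqrtSum (n : ℕ) : ℝ := ∑ i ∈ Icc 1 n, 1 / √(i : ℝ)

lemma invSqrtSum_succ (n : ℕ) : invSqrtSum (n + 1) = invSqrtSum n + 1 / √((n : ℝ) + 1) := by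
  rw [invSqrtSum, sum_Icc_succ_top (by omega), Nat.cast_succ, invSqrtSum]

lemma invSqrtSum_le_two_mul_sqrt (n : ℕ) : invSqrtSum n ≤ 2 * √n := by
  induction n with
  | zero => simp [invSqrtSum]
  | succ n ih =>
    have hpos : 0 < √((n : ℝ) + 1) := sqrt_pos.mpr (by positivity)
    have hsq : √((n : ℝ) + 1) ^ 2 = n + 1 := sq_sqrt (by positivity)
    have hsq' : √(n : ℝ) ^ 2 = n := sq_sqrt (by positivity)
    have hterm : 1 / √((n : ℝ) + 1) ≤ 2 * √((n : ℝ) + 1) - 2 * √n := by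
      rw [div_le_iff₀ hpos]
      nlinarith [sq_nonneg (√((n : ℝ) + 1) - √n)]
    rw [invSqrtSum_succ, Nat.cast_succ]
    linarith

lemma sqrt_two_div_sqrt_le (n : ℕ) :
    √2 / √((n : ℝ) + 1) ≤ 1 / √(2 * n + 1) + 1 / √(2 * n + 2) := by
  have hprod : √(2 * (n : ℝ) + 2) = √2 * √((n : ℝ) + 1) := by
    rw [← sqrt_mul zero_le_two]; ring_nf
  have hmono : 1 / √(2 * (n : ℝ) + 2) ≤ 1 / √(2 * n + 1) :=
    one_div_le_one_div_of_le (sqrt_pos.mpr (by positivity)) (sqrt_le_sqrt (by linarith))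
  have hs : √2 * √2 = 2 := mul_self_sqrt zero_le_two
  calc √2 / √((n : ℝ) + 1) = 2 * (1 / √(2 * n + 2)) := by
        rw [hprod]; field_simp; linarith
    _ ≤ 1 / √(2 * n + 1) + 1 / √(2 * n + 2) := by linarith

lemma sqrt_two_mul_invSqrtSum_add_le {n : ℕ} (hn : 1 ≤ n) :
    √2 * invSqrtSum n + (1 - 1 / √2) ≤ invSqrtSum (2 * n) := by
  induction n, hn using Nat.le_induction with
  | base =>
    have hs : √2 * √2 = 2 := mul_self_sqrt zero_le_two
    have h1 : invSqrtSum 1 = 1 := by simp [invSqrtSum]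
    have h2 : invSqrtSum (2 * 1) = 1 + 1 / √2 := by
      rw [invSqrtSum_succ, h1]; norm_num
    rw [h1, h2, mul_one]
    have : 1 / √2 = √2 / 2 := by field_simp; linarith
    linarith
  | succ n _ ih =>
    rw [show 2 * (n + 1) = 2 * n + 1 + 1 by ring, invSqrtSum_succ, invSqrtSum_succ,
      invSqrtSum_succ]
    have := sqrt_two_div_sqrt_le n
    push_cast
    rw [show (2 : ℝ) * n + 1 + 1 = 2 * n + 2 by ring, mul_add, mul_one_div]
    linarith

def scaledInvSqrtSum (k : ℕ) : ℝ := √(2 ^ k) * invSqrtSum (2 ^ k - 1)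

lemma scaledInvSqrtSum_le (m : ℕ) : scaledInvSqrtSum m ≤ 2 * 2 ^ m := by
  have hcast : ((2 ^ m - 1 : ℕ) : ℝ) ≤ 2 ^ m := by
    exact_mod_cast (Nat.sub_le _ _).trans_eq (Nat.cast_pow 2 m).symm
  calc scaledInvSqrtSum m ≤ √(2 ^ m) * (2 * √(2 ^ m)) :=
        mul_le_mul_of_nonneg_left
          ((invSqrtSum_le_two_mul_sqrt _).trans (by gcongr)) (sqrt_nonneg _)
    _ = 2 * 2 ^ m := by rw [mul_left_comm, mul_self_sqrt (by positivity)]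

lemma two_mul_scaledInvSqrtSum_add_le {m : ℕ} (hm : 1 ≤ m) :
    2 * scaledInvSqrtSum m + √(2 ^ (m + 1)) * (1 - 1 / √2) ≤ scaledInvSqrtSum (m + 1) := by
  set n := 2 ^ m - 1
  have hn : 1 ≤ n := by have := Nat.pow_le_pow_right two_pos hm; omega
  have hidx : 2 ^ (m + 1) - 1 = 2 * n + 1 := by have := Nat.one_le_two_pow (n := m); omega
  have hsqrt : √(2 ^ (m + 1)) = √2 * √(2 ^ m) := by
    rw [pow_succ', sqrt_mul zero_le_two]
  have hs : √2 * √2 = 2 := mul_self_sqrt zero_le_two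
  calc 2 * scaledInvSqrtSum m + √(2 ^ (m + 1)) * (1 - 1 / √2)
      = √(2 ^ (m + 1)) * (√2 * invSqrtSum n + (1 - 1 / √2)) := by
        rw [scaledInvSqrtSum, hsqrt]; linear_combination (-√(2 ^ m) * invSqrtSum n) * hs
    _ ≤ √(2 ^ (m + 1)) * invSqrtSum (2 * n + 1) := by
        gcongr
        rw [invSqrtSum_succ]
        linarith [sqrt_two_mul_invSqrtSum_add_le hn,
          show 0 ≤ 1 / √((2 * n : ℕ) + 1 : ℝ) by positivity]
    _ = scaledInvSqrtSum (m + 1) := by rw [scaledInvSqrtSum, hidx]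

lemma sub_le_scaledInvSqrtSum_combination {m : ℕ} (hm : 1 ≤ m) :
    √(2 ^ (m + 1)) * (1 - 1 / √2) - 4 ≤
      scaledInvSqrtSum (m + 1) - 2 * scaledInvSqrtSum m
        - scaledInvSqrtSum m / ((2 : ℝ) ^ m - 1) := by
  have h2m : (2 : ℝ) ≤ 2 ^ m := by exact_mod_cast Nat.pow_le_pow_right two_pos hm
  have hquot : scaledInvSqrtSum m / ((2 : ℝ) ^ m - 1) ≤ 4 := by
    rw [div_le_iff₀ (by linarith)]
    linarith [scaledInvSqrtSum_le m]
  linarith [two_mul_scaledInvSqrtSum_add_le hm]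

end

/-- With `S k = √(2^k) · ∑_{i=1}^{2^k − 1} 1/√i`, the sequence
`S k − 2 S (k−1) − S (k−1)/(2^{k−1} − 1)` tends to `+∞`. -/
theorem S_combination_tendsto_atTop (S : ℕ → ℝ)
    (hS : ∀ k : ℕ, S k = Real.sqrt (2 ^ k) *
      ∑ i ∈ (Finset.Icc 1 (2 ^ k - 1) : Finset ℕ), 1 / Real.sqrt (i : ℝ)) :
    Tendsto (fun k : ℕ =>
        S k - 2 * S (k - 1) - S (k - 1) / ((2 : ℝ) ^ (k - 1) - 1)) atTop atTop := by
  obtain rfl : S = scaledInvSqrtSum := funext hS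
  have hc : 0 < 1 - 1 / √2 := by
    rw [sub_pos, div_lt_one (by positivity)]; exact one_lt_sqrt_two
  have hlower : Tendsto (fun k : ℕ => √(2 ^ k) * (1 - 1 / √2) - 4) atTop atTop :=
    tendsto_atTop_add_const_right _ _ <| Tendsto.atTop_mul_const hc <|
      tendsto_sqrt_atTop.comp (tendsto_pow_atTop_atTop_of_one_lt one_lt_two)
  refine tendsto_atTop_mono' _ ?_ hlower
  filter_upwards [eventually_ge_atTop 2] with k hk
  obtain ⟨m, rfl⟩ : ∃ m, k = m + 1 := ⟨k - 1, by omega⟩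
  exact sub_le_scaledInvSqrtSum_combination (by omega)
end

section
/- Let n ≥ 1 and let e₁, …, eₙ denote the elementary symmetric polynomials in the variables x₁, …, xₙ over a commutative ring R. Then the determinant of the n×n Jacobian matrix whose (i, j) entry is the partial derivative ∂e_i/∂x_j equals the Vandermonde product ∏_{1 ≤ i < j ≤ n} (x_i − x_j), as an identity of polynomials in R[x₁, …, xₙ]. -/
/-!
Since `e_{k+1} = e_{k+1}(x̂_j) + x_j e_k(x̂_j)`, where `x̂_j` omits `x_j`, we get
`∂e_{k+1}/∂x_j = e_k(x̂_j) = ∑_{r ≤ k} e_{k-r} (-x_j)^r`, the coefficientwise form of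
`∏_{i ≠ j} (1 + x_i t) = ∏_i (1 + x_i t) / (1 + x_j t)`. So the Jacobian is the lower
unitriangular matrix `(e_{i-r})_{i,r}` times the transposed Vandermonde matrix of `-x`, and the
determinant of the latter is `∏_{i<j} (x_i - x_j)`.
-/

open MvPolynomial Finset Matrix

namespace Multiset

theorem esymm_cons_succ {R : Type*} [CommSemiring R] (a : R) (s : Multiset R) (k : ℕ) :
    (a ::ₘ s).esymm (k + 1) = s.esymm (k + 1) + a * s.esymm k := by
  simp only [esymm, powersetCard_cons, map_add, sum_add, map_map, Function.comp_def, prod_cons,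
    sum_map_mul_left]

theorem esymm_eq_sum_esymm_cons_mul_neg_pow {R : Type*} [CommRing R] (a : R) (s : Multiset R)
    (k : ℕ) :
    s.esymm k = ∑ r ∈ Finset.range (k + 1), (a ::ₘ s).esymm (k - r) * (-a) ^ r := by
  induction k with
  | zero => simp [esymm]
  | succ k ih =>
    rw [eq_sub_of_add_eq (esymm_cons_succ a s k).symm, ih, sum_range_succ' _ (k + 1),
      Finset.mul_sum]
    simp only [Nat.add_sub_add_right, Nat.sub_zero, pow_zero, mul_one, pow_succ]
    rw [sub_eq_add_neg, add_comm, ← sum_neg_distrib]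
    exact congrArg (· + _) (sum_congr rfl fun r _ => by ring)

end Multiset

namespace MvPolynomial

variable {σ R : Type*}

theorem pderiv_prod_X_of_notMem [CommSemiring R] {j : σ} {t : Finset σ} (hj : j ∉ t) :
    pderiv j (∏ i ∈ t, X i : MvPolynomial σ R) = 0 := by
  classical
  induction t using Finset.induction_on with
  | empty => simp
  | insert a t ha ih =>
    rw [mem_insert, not_or] at hj
    rw [prod_insert ha, pderiv_mul, ih hj.2, pderiv_X_of_ne (Ne.symm hj.1)]
    simp

theorem pderiv_esymm_map_X_of_notMem [CommSemiring R] {j : σ} {s : Finset σ} (hj : j ∉ s)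
    (k : ℕ) : pderiv j ((s.val.map (X : σ → MvPolynomial σ R)).esymm k) = 0 := by
  rw [Finset.esymm_map_val, map_sum]
  exact sum_eq_zero fun t ht =>
    pderiv_prod_X_of_notMem fun hjt => hj ((mem_powersetCard.1 ht).1 hjt)

theorem univ_val_map_X_eq_cons [CommSemiring R] [Fintype σ] [DecidableEq σ] (j : σ) :
    univ.val.map (X : σ → MvPolynomial σ R) = X j ::ₘ (univ.erase j).val.map X := by
  rw [erase_val, ← Multiset.map_cons, Multiset.cons_erase (mem_univ_val j)]

theorem pderiv_esymm_succ [CommSemiring R] [Fintype σ] [DecidableEq σ] (j : σ) (k : ℕ) :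
    pderiv j (esymm σ R (k + 1)) = ((univ.erase j).val.map X).esymm k := by
  rw [esymm_eq_multiset_esymm, univ_val_map_X_eq_cons j, Multiset.esymm_cons_succ, map_add,
    pderiv_mul, pderiv_X_self, pderiv_esymm_map_X_of_notMem (notMem_erase j univ),
    pderiv_esymm_map_X_of_notMem (notMem_erase j univ)]
  simp

theorem pderiv_esymm_succ_eq_sum [CommRing R] [Fintype σ] [DecidableEq σ] (j : σ) (k : ℕ) :
    pderiv j (esymm σ R (k + 1)) =
      ∑ r ∈ Finset.range (k + 1), esymm σ R (k - r) * (-X j) ^ r := by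
  rw [pderiv_esymm_succ, Multiset.esymm_eq_sum_esymm_cons_mul_neg_pow (X j),
    ← univ_val_map_X_eq_cons, esymm_eq_multiset_esymm]

end MvPolynomial

theorem Fin.sum_ite_le_eq_sum_range {M : Type*} [AddCommMonoid M] {n : ℕ} (i : Fin n)
    (g : ℕ → M) :
    ∑ r : Fin n, (if r ≤ i then g r else 0) = ∑ r ∈ range (i + 1), g r := by
  rw [← sum_filter, filter_ge_eq_Iic, Nat.range_succ_eq_Iic, ← Fin.map_valEmbedding_Iic,
    sum_map]
  rfl

theorem Finset.prod_filter_lt_eq_prod_prod_Ioi {ι M : Type*} [Fintype ι] [LinearOrder ι]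
    [LocallyFiniteOrderTop ι] [CommMonoid M] (f : ι → ι → M) :
    ∏ p ∈ univ.filter (fun p : ι × ι => p.1 < p.2), f p.1 p.2 =
      ∏ i, ∏ j ∈ Ioi i, f i j := by
  rw [prod_filter, Fintype.prod_prod_type]
  refine prod_congr rfl fun i _ => ?_
  rw [← prod_filter]
  congr 1
  ext j
  simp

theorem Matrix.det_of_ite_le_sub {S : Type*} [CommRing S] (n : ℕ) (c : ℕ → S) :
    det (of fun i j : Fin n => if j ≤ i then c (i - j) else 0) = c 0 ^ n := by
  rw [det_of_isLowerTriangular]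
  · simp
  · intro i j hij
    exact if_neg (not_le.2 hij)

theorem MvPolynomial.jacobian_esymm_eq_mul_vandermonde (n : ℕ) (R : Type*) [CommRing R] :
    (of fun i j : Fin n => pderiv j (esymm (Fin n) R ((i : ℕ) + 1))) =
      (of fun i r : Fin n => if r ≤ i then esymm (Fin n) R (i - r) else 0) *
        (vandermonde fun j : Fin n => -X j)ᵀ := by
  ext i j
  simp only [mul_apply, of_apply, transpose_apply, vandermonde_apply, ite_mul, zero_mul]
  rw [pderiv_esymm_succ_eq_sum,
    Fin.sum_ite_le_eq_sum_range i fun r => esymm (Fin n) R (i - r) * (-X j) ^ r]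

theorem jacobian_esymm_eq_vandermonde_general (n : ℕ)
    (R : Type*) [CommRing R] :
    Matrix.det (Matrix.of fun i j : Fin n =>
        MvPolynomial.pderiv j (MvPolynomial.esymm (Fin n) R ((i : ℕ) + 1)))
      = ∏ p ∈ Finset.univ.filter (fun p : Fin n × Fin n => p.1 < p.2),
          (MvPolynomial.X p.1 - MvPolynomial.X p.2) := by
  rw [jacobian_esymm_eq_mul_vandermonde, det_mul, det_of_ite_le_sub, esymm_zero, one_pow,
    one_mul, det_transpose, det_vandermonde, prod_filter_lt_eq_prod_prod_Ioi (fun i j => X i - X j)]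
  simp only [neg_sub_neg]

/-- The determinant of the Jacobian matrix `(∂e_i/∂x_j)_{1 ≤ i, j ≤ n}` of
the elementary symmetric polynomials `e₁, …, eₙ` in `x₁, …, xₙ` equals the Vandermonde
product `∏_{i < j} (x_i − x_j)`. -/
theorem jacobian_esymm_eq_vandermonde (n : ℕ) (hn : 1 ≤ n)
    (R : Type*) [CommRing R] :
    Matrix.det (Matrix.of fun i j : Fin n =>
        MvPolynomial.pderiv j (MvPolynomial.esymm (Fin n) R ((i : ℕ) + 1)))
      = ∏ p ∈ Finset.univ.filter (fun p : Fin n × Fin n => p.1 < p.2),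
          (MvPolynomial.X p.1 - MvPolynomial.X p.2) :=
  jacobian_esymm_eq_vandermonde_general n R
end

section
/- Let X be a set and let f, g, h be bijections of X. Define the support of a bijection σ of X as supp(σ) := {x ∈ X : σ(x) ≠ x}, and for bijections a, b define the commutator [a, b] := a⁻¹ ∘ b⁻¹ ∘ a ∘ b. Assume that f(supp(g)) ∩ supp(g) = ∅ and f(supp(g)) ∩ supp(h) = ∅. Then g⁻¹ ∘ h ∘ g = [f⁻¹, g]⁻¹ ∘ h ∘ [f⁻¹, g]. -/
/-! `[f⁻¹, g] = c * g` with `c = f * g⁻¹ * f⁻¹`, a conjugate of `g⁻¹` and hence supported on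
`f '' supp g`. That set misses `supp h`, so `c` commutes with `h` and drops out of the
conjugation. -/

namespace Equiv.Perm

variable {X : Type*}

theorem set_support_conj (f σ : Perm X) :
    {x | (f * σ * f⁻¹) x ≠ x} = f '' {x | σ x ≠ x} := by
  ext x
  rw [Set.mem_image_equiv, Set.mem_ofPred_eq, Set.mem_ofPred_eq, mul_apply, mul_apply,
    Ne, ← eq_inv_iff_eq]
  rfl

theorem disjoint_of_set_support_inter_eq_empty {σ τ : Perm X}
    (h : {x | σ x ≠ x} ∩ {x | τ x ≠ x} = ∅) : σ.Disjoint τ := fun x => by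
  by_contra! hx
  exact h.subset hx

end Equiv.Perm

theorem conj_mul_eq_conj_of_commute {G : Type*} [Group G] {c h : G} (hc : Commute c h) (g : G) :
    (c * g)⁻¹ * h * (c * g) = g⁻¹ * h * g := by
  rw [mul_assoc _ h, ← mul_assoc h c, ← hc.eq]
  group

open Equiv.Perm in
theorem conjugation_by_commutator_general {X : Type*} (f g h : Equiv.Perm X)
    (h₂ : (⇑f '' {x : X | g x ≠ x}) ∩ {x : X | h x ≠ x} = ∅) :
    g⁻¹ * h * g = (f * g⁻¹ * f⁻¹ * g)⁻¹ * h * (f * g⁻¹ * f⁻¹ * g) := by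
  have hsupp : {x | (f * g⁻¹ * f⁻¹) x ≠ x} = f '' {x | g x ≠ x} := by
    rw [set_support_conj, ← set_support_symm_eq]; rfl
  have hcomm : Commute (f * g⁻¹ * f⁻¹) h :=
    (disjoint_of_set_support_inter_eq_empty (hsupp ▸ h₂)).commute
  exact (conj_mul_eq_conj_of_commute hcomm g).symm

/-- For bijections `f, g, h` of a set `X`, if `f(supp g)` is disjoint from
`supp g` and from `supp h`, then `g⁻¹ ∘ h ∘ g = [f⁻¹, g]⁻¹ ∘ h ∘ [f⁻¹, g]`, where
`[a, b] := a⁻¹ ∘ b⁻¹ ∘ a ∘ b` (so `[f⁻¹, g] = f ∘ g⁻¹ ∘ f⁻¹ ∘ g`, i.e. the permutation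
`f * g⁻¹ * f⁻¹ * g`). -/
theorem conjugation_by_commutator {X : Type*} (f g h : Equiv.Perm X)
    (h₁ : (⇑f '' {x : X | g x ≠ x}) ∩ {x : X | g x ≠ x} = ∅)
    (h₂ : (⇑f '' {x : X | g x ≠ x}) ∩ {x : X | h x ≠ x} = ∅) :
    g⁻¹ * h * g = (f * g⁻¹ * f⁻¹ * g)⁻¹ * h * (f * g⁻¹ * f⁻¹ * g) :=
  conjugation_by_commutator_general f g h h₂
end
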